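/- Let Δ ∈ (0,1), γ > 1, q₀ = 1/Δ, and ν₀(q) = ‖x^{-Δ}|log x|^γ‖_{L^q((0,1))}. Then the 'power' of ν₀, defined as limsup_{q→q₀⁻} |log ν₀(q)| / |log(q₀ - q)|, equals γ + Δ. -/

import Mathlib

/-!
The substitution `x = e^{-t}` turns `∫₀¹ x^{-a} (-log x)^b dx` into a Gamma integral, so for
`0 < q < q₀` one has `ν₀(q)^q = Γ(γq+1) / (1-Δq)^{γq+1}` with `1 - Δq = Δ(q₀-q)`. Hence
`log ν₀(q) = A(q) - B(q) log(q₀-q)` with `A`, `B` continuous at `q₀` and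
`B(q₀) = (γq₀+1)/q₀ = γ+Δ`. Since `|log(q₀-q)| → ∞`, the quotient in question converges to `γ+Δ`,
so its limsup is this limit.
-/

open MeasureTheory Real Set Filter Topology

lemma image_exp_neg_Ioi : (fun t : ℝ => exp (-t)) '' Ioi 0 = Ioo 0 1 := by
  ext x
  constructor
  · rintro ⟨t, ht, rfl⟩
    exact ⟨exp_pos _, exp_lt_one_iff.mpr (neg_lt_zero.mpr ht)⟩
  · rintro ⟨hx0, hx1⟩
    exact ⟨-log x, neg_pos.mpr (log_neg hx0 hx1), by simp [exp_log hx0]⟩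

theorem integral_Ioo_rpow_neg_mul_neg_log_rpow {a b : ℝ} (ha : a < 1) (hb : -1 < b) :
    ∫ x in Ioo (0 : ℝ) 1, x ^ (-a) * (-log x) ^ b = (1 / (1 - a)) ^ (b + 1) * Gamma (b + 1) := by
  rw [← image_exp_neg_Ioi, integral_image_eq_integral_abs_deriv_smul measurableSet_Ioi
      (fun t _ => (hasDerivAt_neg t).exp.hasDerivWithinAt)
      (fun s _ t _ h => neg_injective (exp_injective h)),
    ← integral_rpow_mul_exp_neg_mul_Ioi (by linarith) (by linarith)]
  refine setIntegral_congr_fun measurableSet_Ioi fun t _ => ?_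
  rw [← exp_mul, log_exp, neg_neg, add_sub_cancel_right, smul_eq_mul, mul_neg_one, abs_neg,
    abs_of_pos (exp_pos _), ← mul_assoc, ← exp_add, mul_comm]
  ring_nf

lemma rpow_neg_mul_neg_log_rpow_rpow {x : ℝ} (hx0 : 0 ≤ x) (hx1 : x ≤ 1) (a b q : ℝ) :
    (x ^ (-a) * (-log x) ^ b) ^ q = x ^ (-(a * q)) * (-log x) ^ (b * q) := by
  have hlog : 0 ≤ -log x := neg_nonneg.mpr (log_nonpos hx0 hx1)
  rw [mul_rpow (rpow_nonneg hx0 _) (rpow_nonneg hlog _), ← rpow_mul hx0, ← rpow_mul hlog, neg_mul]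

/-- `ν₀(q)`, the `L^q((0,1))` norm of `x^{-Δ} (-log x)^γ`. -/
noncomputable def nu0 (Δ γ q : ℝ) : ℝ :=
  (∫ x in Ioo (0 : ℝ) 1, (x ^ (-Δ) * (-log x) ^ γ) ^ q) ^ (1 / q)

lemma log_nu0_eq {Δ γ q : ℝ} (hΔ : 0 < Δ) (hγq : 0 < γ * q + 1) (hq : 0 < q) (hqΔ : q < 1 / Δ) :
    log (nu0 Δ γ q)
      = (log (Gamma (γ * q + 1)) - (γ * q + 1) * log Δ) / q
        - (γ * q + 1) / q * log (1 / Δ - q) := by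
  have hΔq : 0 < 1 - Δ * q := by
    have := (lt_div_iff₀ hΔ).mp hqΔ
    linarith
  have hint : ∫ x in Ioo (0 : ℝ) 1, (x ^ (-Δ) * (-log x) ^ γ) ^ q
      = (1 / (1 - Δ * q)) ^ (γ * q + 1) * Gamma (γ * q + 1) := by
    rw [setIntegral_congr_fun measurableSet_Ioo
      fun x hx => rpow_neg_mul_neg_log_rpow_rpow hx.1.le hx.2.le Δ γ q]
    exact integral_Ioo_rpow_neg_mul_neg_log_rpow (by linarith) (by linarith)
  have hfactor : 1 - Δ * q = Δ * (1 / Δ - q) := by field_simp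
  have hGamma := Gamma_pos_of_pos hγq
  rw [nu0, hint, log_rpow (mul_pos (by positivity) hGamma), log_mul (by positivity) hGamma.ne',
    log_rpow (by positivity), one_div (1 - _), log_inv, hfactor,
    log_mul hΔ.ne' (sub_pos.mpr hqΔ).ne']
  field_simp
  ring

lemma continuousAt_log_Gamma {s : ℝ} (hs : 0 < s) : ContinuousAt (fun t => log (Gamma t)) s :=
  ((differentiableOn_Gamma_Ioi.differentiableAt (Ioi_mem_nhds hs)).continuousAt).log
    (Gamma_pos_of_pos hs).ne'

lemma tendsto_abs_log_sub_nhdsLT (c : ℝ) :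
    Tendsto (fun q => |log (c - q)|) (𝓝[<] c) atTop := by
  refine tendsto_abs_atBot_atTop.comp (tendsto_log_nhdsGT_zero.comp ?_)
  refine tendsto_nhdsWithin_iff.mpr
    ⟨?_, eventually_nhdsWithin_of_forall fun q hq => sub_pos.mpr (mem_Iio.mp hq)⟩
  simpa using ((continuous_sub_left c).tendsto c).mono_left nhdsWithin_le_nhds

lemma tendsto_abs_sub_mul_div_abs {α : Type*} {l : Filter α} {A B u : α → ℝ} {a b : ℝ}
    (hA : Tendsto A l (𝓝 a)) (hB : Tendsto B l (𝓝 b)) (hu : Tendsto (fun x => |u x|) l atTop) :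
    Tendsto (fun x => |A x - B x * u x| / |u x|) l (𝓝 |b|) := by
  have hAu : Tendsto (fun x => A x / u x) l (𝓝 0) := by
    rw [tendsto_zero_iff_abs_tendsto_zero]
    simpa only [Function.comp_def, abs_div] using hA.abs.div_atTop hu
  have hrw : ∀ᶠ x in l, |A x / u x - B x| = |A x - B x * u x| / |u x| := by
    filter_upwards [hu.eventually_gt_atTop 0] with x hx
    rw [← abs_div, sub_div, mul_div_cancel_right₀ _ (abs_pos.mp hx)]
  simpa only [zero_sub, abs_neg] using ((hAu.sub hB).abs).congr' hrw

/-- For `Δ ∈ (0,1)`, `γ > 1`, `q₀ = 1/Δ` and `ν₀(q) = ‖x^{-Δ}(-log x)^γ‖_{L^q((0,1))}`,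
the power `limsup_{q→q₀⁻} |log ν₀(q)| / |log(q₀-q)|` equals `γ + Δ`. -/
theorem f0_power_of_blowup (Δ γ : ℝ) (hΔ : Δ ∈ Ioo (0:ℝ) 1) (hγ : 1 < γ) :
    limsup (fun q : ℝ =>
        |Real.log ((∫ x in Ioo (0:ℝ) 1, (x ^ (-Δ) * (-Real.log x) ^ γ) ^ q) ^ (1/q))|
          / |Real.log (1/Δ - q)|)
      (nhdsWithin (1/Δ) (Iio (1/Δ))) = γ + Δ := by
  change limsup (fun q => |log (nu0 Δ γ q)| / |log (1 / Δ - q)|) (𝓝[<] (1 / Δ)) = γ + Δ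
  obtain ⟨hΔ0, -⟩ := hΔ
  have hq₀ : 0 < 1 / Δ := one_div_pos.mpr hΔ0
  have hA :
      ContinuousAt (fun q => (log (Gamma (γ * q + 1)) - (γ * q + 1) * log Δ) / q) (1 / Δ) := by
    have hlogGamma : ContinuousAt (fun q => log (Gamma (γ * q + 1))) (1 / Δ) :=
      (continuousAt_log_Gamma (by positivity)).comp (f := fun q => γ * q + 1) (by fun_prop)
    fun_prop (disch := exact hq₀.ne')
  have hB : ContinuousAt (fun q : ℝ => (γ * q + 1) / q) (1 / Δ) := by
    fun_prop (disch := exact hq₀.ne')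
  have hBq₀ : (γ * (1 / Δ) + 1) / (1 / Δ) = γ + Δ := by field_simp
  have hlog_nu0 : ∀ᶠ q in 𝓝[<] (1 / Δ), |log (nu0 Δ γ q)| / |log (1 / Δ - q)|
      = |(log (Gamma (γ * q + 1)) - (γ * q + 1) * log Δ) / q
          - (γ * q + 1) / q * log (1 / Δ - q)| / |log (1 / Δ - q)| := by
    filter_upwards [Ioo_mem_nhdsLT hq₀] with q ⟨hq0, hq⟩
    rw [log_nu0_eq hΔ0 (by positivity) hq0 hq]
  have hlim := tendsto_abs_sub_mul_div_abs (hA.tendsto.mono_left nhdsWithin_le_nhds)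
    (hB.tendsto.mono_left nhdsWithin_le_nhds) (tendsto_abs_log_sub_nhdsLT (1 / Δ))
  rw [limsup_congr hlog_nu0, hlim.limsup_eq, hBq₀, abs_of_pos (by linarith)]
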